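/- Fix a real number R and ρ ∈ [0,1]. Then E_e(R,Q) ≥ min over all pairs (T,V) of { D(T∘V‖Q∘P) + ρ·( D(T∘V‖T×Q) − R ) }. In the case of equality, every minimizer of E_e(R,Q) also minimizes the right-hand side and satisfies D(T∘V‖T×Q) = R when ρ ∈ (0,1), respectively D(T∘V‖T×Q) ≥ R when ρ = 1 and D(T∘V‖T×Q) ≤ R when ρ = 0. Conversely, if the right-hand minimum is attained by some (T_ρ,V_ρ) satisfying the corresponding condition (D(T_ρ∘V_ρ‖T_ρ×Q) = R, or ≥ R for ρ = 1, or ≤ R for ρ = 0), then (T_ρ,V_ρ) also attains the minimum defining E_e(R,Q) and equality holds. -/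

import Mathlib

open scoped BigOperators
open Filter Topology

/-- `f` is a probability mass function on a finite alphabet. -/
def IsPMF {α : Type*} [Fintype α] (f : α → ℝ) : Prop :=
  (∀ a, 0 ≤ f a) ∧ ∑ a, f a = 1

/-- `P` is a discrete memoryless channel from `𝓧` to `𝓨`. -/
def IsChannel {𝓧 𝓨 : Type*} [Fintype 𝓧] [Fintype 𝓨] (P : 𝓧 → 𝓨 → ℝ) : Prop :=
  ∀ x, IsPMF (P x)

/-- `V` is a conditional pmf on `𝓧` given `𝓨`. -/
def IsCondPMF {𝓧 𝓨 : Type*} [Fintype 𝓧] [Fintype 𝓨] (V : 𝓨 → 𝓧 → ℝ) : Prop :=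
  ∀ y, IsPMF (V y)

/-- one term `s·log(s/t)` of a KL divergence, with the conventions
    `0·log(0/t) = 0` and `s·log(s/0) = +∞` for `s > 0`. -/
noncomputable def klTerm (s t : ℝ) : EReal :=
  if s = 0 then 0 else if t = 0 then ⊤ else ((s * Real.log (s / t) : ℝ) : EReal)

/-- `D(T∘V ‖ Q∘P)`. -/
noncomputable def DQP {𝓧 𝓨 : Type*} [Fintype 𝓧] [Fintype 𝓨]
    (T : 𝓨 → ℝ) (V : 𝓨 → 𝓧 → ℝ) (Q : 𝓧 → ℝ) (P : 𝓧 → 𝓨 → ℝ) : EReal :=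
  ∑ y, ∑ x, klTerm (T y * V y x) (Q x * P x y)

/-- `D(T∘V ‖ T×Q)`. -/
noncomputable def DTQ {𝓧 𝓨 : Type*} [Fintype 𝓧] [Fintype 𝓨]
    (T : 𝓨 → ℝ) (V : 𝓨 → 𝓧 → ℝ) (Q : 𝓧 → ℝ) : EReal :=
  ∑ y, ∑ x, klTerm (T y * V y x) (T y * Q x)

/-- Gallager's function `E₀(ρ,Q)` (for `ρ > −1`). -/
noncomputable def E0 {𝓧 𝓨 : Type*} [Fintype 𝓧] [Fintype 𝓨]
    (ρ : ℝ) (Q : 𝓧 → ℝ) (P : 𝓧 → 𝓨 → ℝ) : ℝ :=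
  - Real.log (∑ y, (∑ x, Q x * P x y ^ (1 / (1 + ρ))) ^ (1 + ρ))

/-- The joint distribution `T_ρ∘V_ρ` on `𝓧 × 𝓨` (for `ρ > −1`). -/
noncomputable def Jrho {𝓧 𝓨 : Type*} [Fintype 𝓧] [Fintype 𝓨]
    (ρ : ℝ) (Q : 𝓧 → ℝ) (P : 𝓧 → 𝓨 → ℝ) (x : 𝓧) (y : 𝓨) : ℝ :=
  Q x * P x y ^ (1 / (1 + ρ)) * (∑ a, Q a * P a y ^ (1 / (1 + ρ))) ^ ρ /
    ∑ y', (∑ a, Q a * P a y' ^ (1 / (1 + ρ))) ^ (1 + ρ)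

/-- `max_{x : Q(x) > 0} P(y|x)`. -/
noncomputable def maxP {𝓧 𝓨 : Type*} (Q : 𝓧 → ℝ) (P : 𝓧 → 𝓨 → ℝ) (y : 𝓨) : ℝ :=
  ⨆ x : {x // 0 < Q x}, P x.1 y

/-- `E₀(−1,Q) = −log ∑_y max_{x : Q(x)>0} P(y|x)`. -/
noncomputable def E0m1 {𝓧 𝓨 : Type*} [Fintype 𝓧] [Fintype 𝓨]
    (Q : 𝓧 → ℝ) (P : 𝓧 → 𝓨 → ℝ) : ℝ :=
  - Real.log (∑ y, maxP Q P y)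

/-- `E₀(ρ,Q)` extended to `ρ = −1`. -/
noncomputable def E0full {𝓧 𝓨 : Type*} [Fintype 𝓧] [Fintype 𝓨]
    (ρ : ℝ) (Q : 𝓧 → ℝ) (P : 𝓧 → 𝓨 → ℝ) : ℝ :=
  if ρ = -1 then E0m1 Q P else E0 ρ Q P

/-- `T_{−1}(y) ∝ max_{a : Q(a)>0} P(y|a)`. -/
noncomputable def Tm1 {𝓧 𝓨 : Type*} [Fintype 𝓧] [Fintype 𝓨]
    (Q : 𝓧 → ℝ) (P : 𝓧 → 𝓨 → ℝ) (y : 𝓨) : ℝ :=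
  maxP Q P y / ∑ y', maxP Q P y'

/-- `V` is admissible at `ρ = −1`: `V(x|y) = 0` for every `x` outside
    `argmax_{a : Q(a)>0} P(y|a)`. -/
def AdmissibleAtM1 {𝓧 𝓨 : Type*} [Fintype 𝓧] [Fintype 𝓨]
    (Q : 𝓧 → ℝ) (P : 𝓧 → 𝓨 → ℝ) (V : 𝓨 → 𝓧 → ℝ) : Prop :=
  ∀ y x, ¬ (0 < Q x ∧ ∀ a, 0 < Q a → P a y ≤ P x y) → V y x = 0

/-- the error exponent `E_e(R,Q)`. -/
noncomputable def Ee {𝓧 𝓨 : Type*} [Fintype 𝓧] [Fintype 𝓨]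
    (R : ℝ) (Q : 𝓧 → ℝ) (P : 𝓧 → 𝓨 → ℝ) : EReal :=
  sInf {v | ∃ T : 𝓨 → ℝ, ∃ V : 𝓨 → 𝓧 → ℝ, IsPMF T ∧ IsCondPMF V ∧
    v = DQP T V Q P + max (DTQ T V Q - (R : EReal)) 0}

/-- the ML correct-decoding exponent `E_c^{ML}(R,Q)`. -/
noncomputable def EcML {𝓧 𝓨 : Type*} [Fintype 𝓧] [Fintype 𝓨]
    (R : ℝ) (Q : 𝓧 → ℝ) (P : 𝓧 → 𝓨 → ℝ) : EReal :=
  sInf {v | ∃ T : 𝓨 → ℝ, ∃ V : 𝓨 → 𝓧 → ℝ, IsPMF T ∧ IsCondPMF V ∧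
    v = DQP T V Q P + max ((R : EReal) - DTQ T V Q) 0}

/-- the strict correct-decoding exponent `E_c(R,Q)` (`+∞` if infeasible). -/
noncomputable def Ec {𝓧 𝓨 : Type*} [Fintype 𝓧] [Fintype 𝓨]
    (R : ℝ) (Q : 𝓧 → ℝ) (P : 𝓧 → 𝓨 → ℝ) : EReal :=
  sInf {v | ∃ T : 𝓨 → ℝ, ∃ V : 𝓨 → 𝓧 → ℝ, IsPMF T ∧ IsCondPMF V ∧
    (R : EReal) ≤ DTQ T V Q ∧ v = DQP T V Q P}

/-- the mutual information `I(Q∘P)`. -/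
noncomputable def MI {𝓧 𝓨 : Type*} [Fintype 𝓧] [Fintype 𝓨]
    (Q : 𝓧 → ℝ) (P : 𝓧 → 𝓨 → ℝ) : ℝ :=
  ∑ x, ∑ y, if Q x * P x y = 0 then 0
    else Q x * P x y * Real.log (P x y / ∑ a, Q a * P a y)

/-- the capacity `C(Z)` of the channel restricted to input letters in `Z`. -/
noncomputable def capacity {𝓧 𝓨 : Type*} [Fintype 𝓧] [Fintype 𝓨]
    (P : 𝓧 → 𝓨 → ℝ) (Z : Set 𝓧) : ℝ :=
  sSup {c | ∃ Q' : 𝓧 → ℝ, IsPMF Q' ∧ (∀ x, 0 < Q' x → x ∈ Z) ∧ c = MI Q' P}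

/-- `R_{−1}^{−}(Q)`. -/
noncomputable def Rm1minus {𝓧 𝓨 : Type*} [Fintype 𝓧] [Fintype 𝓨]
    (Q : 𝓧 → ℝ) (P : 𝓧 → 𝓨 → ℝ) : EReal :=
  sInf {v | ∃ V : 𝓨 → 𝓧 → ℝ, IsCondPMF V ∧ AdmissibleAtM1 Q P V ∧
    v = DTQ (Tm1 Q P) V Q}

/-- `R_{−1}^{+}(Q)`. -/
noncomputable def Rm1plus {𝓧 𝓨 : Type*} [Fintype 𝓧] [Fintype 𝓨]
    (Q : 𝓧 → ℝ) (P : 𝓧 → 𝓨 → ℝ) : EReal :=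
  sSup {v | ∃ V : 𝓨 → 𝓧 → ℝ, IsCondPMF V ∧ AdmissibleAtM1 Q P V ∧
    v = DTQ (Tm1 Q P) V Q}

/-- `F_ρ(T∘V, Q) = D(T∘V‖Q∘P) + ρ·D(T∘V‖T×Q)`. -/
noncomputable def Frho {𝓧 𝓨 : Type*} [Fintype 𝓧] [Fintype 𝓨]
    (ρ : ℝ) (T : 𝓨 → ℝ) (V : 𝓨 → 𝓧 → ℝ) (Q : 𝓧 → ℝ) (P : 𝓧 → 𝓨 → ℝ) : EReal :=
  DQP T V Q P + (ρ : EReal) * DTQ T V Q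

/-- the unconstrained penalized minimum
    `min_{T,V} { D(T∘V‖Q∘P) + ρ·(D(T∘V‖T×Q) − R) }`. -/
noncomputable def penMin {𝓧 𝓨 : Type*} [Fintype 𝓧] [Fintype 𝓨]
    (Q : 𝓧 → ℝ) (P : 𝓧 → 𝓨 → ℝ) (R ρ : ℝ) : EReal :=
  sInf {v | ∃ T : 𝓨 → ℝ, ∃ V : 𝓨 → 𝓧 → ℝ, IsPMF T ∧ IsCondPMF V ∧
    v = DQP T V Q P + (ρ : EReal) * (DTQ T V Q - (R : EReal))}

/-- the support-constrained penalized minimum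
    `min_{T,V : supp(V) ⊆ supp(Q)} { D(T∘V‖Q∘P) − ρ·(R − D(T∘V‖T×Q)) }`. -/
noncomputable def penMinS {𝓧 𝓨 : Type*} [Fintype 𝓧] [Fintype 𝓨]
    (Q : 𝓧 → ℝ) (P : 𝓧 → 𝓨 → ℝ) (R ρ : ℝ) : EReal :=
  sInf {v | ∃ T : 𝓨 → ℝ, ∃ V : 𝓨 → 𝓧 → ℝ, IsPMF T ∧ IsCondPMF V ∧
    (∀ y x, Q x = 0 → V y x = 0) ∧
    v = DQP T V Q P - (ρ : EReal) * ((R : EReal) - DTQ T V Q)}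


/-!
Pointwise, `ρ·(d − R) ≤ |d − R|⁺` for `ρ ∈ [0,1]`, which gives the inequality after taking
minima. Equality of the minima forces a minimizer of `E_e` to attain this pointwise bound with
equality, i.e. `ρ` is a subgradient of `t ↦ |t − R|⁺` at `d = D(T∘V‖T×Q)`; conversely, at such a
point the two objectives agree. Finiteness of `E_e`, witnessed by the true joint distribution
`Q∘P` written as output distribution times posterior, is what allows cancelling `D(T∘V‖Q∘P)`.
-/

open Set

lemma klTerm_ne_bot (s t : ℝ) : klTerm s t ≠ ⊥ := by
  unfold klTerm
  split_ifs
  · exact EReal.zero_ne_bot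
  · exact top_ne_bot
  · exact EReal.coe_ne_bot _

lemma klTerm_ne_top {s t : ℝ} (h : t = 0 → s = 0) : klTerm s t ≠ ⊤ := by
  unfold klTerm
  split_ifs with hs ht
  · exact EReal.zero_ne_top
  · exact absurd (h ht) hs
  · exact EReal.coe_ne_top _

namespace EReal

lemma sum_ne_bot {ι : Type*} {s : Finset ι} {f : ι → EReal} (h : ∀ i ∈ s, f i ≠ ⊥) :
    ∑ i ∈ s, f i ≠ ⊥ :=
  Finset.sum_induction f (· ≠ ⊥) (fun _ _ ha hb => add_ne_bot_iff.2 ⟨ha, hb⟩) zero_ne_bot h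

lemma sum_ne_top {ι : Type*} {s : Finset ι} {f : ι → EReal} (h : ∀ i ∈ s, f i ≠ ⊤) :
    ∑ i ∈ s, f i ≠ ⊤ :=
  Finset.sum_induction f (· ≠ ⊤) (fun _ _ ha hb => add_ne_top ha hb) zero_ne_top h

lemma coe_max (a b : ℝ) : ((max a b : ℝ) : EReal) = max (a : EReal) b :=
  coe_strictMono.monotone.map_max

lemma sub_coe_ne_bot {x : EReal} (hx : x ≠ ⊥) (r : ℝ) : x - r ≠ ⊥ :=
  add_ne_bot_iff.2 ⟨hx, coe_ne_bot _⟩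

lemma sub_coe_ne_top {x : EReal} (hx : x ≠ ⊤) (r : ℝ) : x - r ≠ ⊤ :=
  add_ne_top hx (coe_ne_top _)

lemma coe_mul_le_max_zero {ρ : ℝ} (hρ : ρ ∈ Icc (0 : ℝ) 1) {e : EReal} (he : e ≠ ⊥) :
    (ρ : EReal) * e ≤ max e 0 := by
  induction e with
  | bot => exact absurd rfl he
  | coe r =>
    have : ρ * r ≤ max r 0 := by
      rcases le_total r 0 with h | h
      · exact (mul_nonpos_of_nonneg_of_nonpos hρ.1 h).trans (le_max_right _ _)
      · exact (mul_le_of_le_one_left h hρ.2).trans (le_max_left _ _)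
    rw [← coe_mul, ← coe_zero, ← coe_max]
    exact EReal.coe_le_coe this
  | top =>
    rcases hρ.1.eq_or_lt with h | h
    · simp [← h]
    · rw [coe_mul_top_of_pos h]; exact le_max_left _ _

end EReal

section Divergences

variable {𝓧 𝓨 : Type*} [Fintype 𝓧] [Fintype 𝓨]
  (T : 𝓨 → ℝ) (V : 𝓨 → 𝓧 → ℝ) (Q : 𝓧 → ℝ) (P : 𝓧 → 𝓨 → ℝ)

lemma DQP_ne_bot : DQP T V Q P ≠ ⊥ :=
  EReal.sum_ne_bot fun _ _ => EReal.sum_ne_bot fun _ _ => klTerm_ne_bot _ _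

lemma DTQ_ne_bot : DTQ T V Q ≠ ⊥ :=
  EReal.sum_ne_bot fun _ _ => EReal.sum_ne_bot fun _ _ => klTerm_ne_bot _ _

variable {T V Q P}

lemma DQP_ne_top (h : ∀ y x, Q x * P x y = 0 → T y * V y x = 0) : DQP T V Q P ≠ ⊤ :=
  EReal.sum_ne_top fun y _ => EReal.sum_ne_top fun x _ => klTerm_ne_top (h y x)

lemma DTQ_ne_top (h : ∀ y x, T y * Q x = 0 → T y * V y x = 0) : DTQ T V Q ≠ ⊤ :=
  EReal.sum_ne_top fun y _ => EReal.sum_ne_top fun x _ => klTerm_ne_top (h y x)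

lemma penMin_le (R ρ : ℝ) (hT : IsPMF T) (hV : IsCondPMF V) :
    penMin Q P R ρ ≤ DQP T V Q P + ρ * (DTQ T V Q - R) :=
  sInf_le ⟨T, V, hT, hV, rfl⟩

lemma Ee_le (R : ℝ) (hT : IsPMF T) (hV : IsCondPMF V) :
    Ee R Q P ≤ DQP T V Q P + max (DTQ T V Q - R) 0 :=
  sInf_le ⟨T, V, hT, hV, rfl⟩

end Divergences

section Posterior

variable {𝓧 𝓨 : Type*} [Fintype 𝓧] [Fintype 𝓨]

def outputPMF (Q : 𝓧 → ℝ) (P : 𝓧 → 𝓨 → ℝ) (y : 𝓨) : ℝ :=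
  ∑ x, Q x * P x y

/-- The posterior `Q(x)P(y|x) / (Q∘P)(y)`, set to `Q` on outputs of probability zero. -/
noncomputable def posterior (Q : 𝓧 → ℝ) (P : 𝓧 → 𝓨 → ℝ) (y : 𝓨) (x : 𝓧) : ℝ :=
  if outputPMF Q P y = 0 then Q x else Q x * P x y / outputPMF Q P y

variable {Q : 𝓧 → ℝ} {P : 𝓧 → 𝓨 → ℝ} (hP : IsChannel P) (hQ : IsPMF Q)
include hP hQ

lemma outputPMF_nonneg (y : 𝓨) : 0 ≤ outputPMF Q P y :=
  Finset.sum_nonneg fun x _ => mul_nonneg (hQ.1 x) ((hP x).1 y)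

lemma isPMF_outputPMF : IsPMF (outputPMF Q P) := by
  refine ⟨outputPMF_nonneg hP hQ, ?_⟩
  simp only [outputPMF]
  rw [Finset.sum_comm]
  simp only [← Finset.mul_sum, (hP _).2, mul_one, hQ.2]

lemma isCondPMF_posterior : IsCondPMF (posterior Q P) := by
  intro y
  by_cases h : outputPMF Q P y = 0
  · rwa [show posterior Q P y = Q from funext fun x => if_pos h]
  · refine ⟨fun x => ?_, ?_⟩
    · simp only [posterior, h, if_false]
      exact div_nonneg (mul_nonneg (hQ.1 x) ((hP x).1 y)) (outputPMF_nonneg hP hQ y)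
    · simp only [posterior, h, if_false, ← Finset.sum_div]
      exact div_self h

lemma outputPMF_mul_posterior (y : 𝓨) (x : 𝓧) :
    outputPMF Q P y * posterior Q P y x = Q x * P x y := by
  by_cases h : outputPMF Q P y = 0
  · have hterms := (Finset.sum_eq_zero_iff_of_nonneg fun x _ =>
      mul_nonneg (hQ.1 x) ((hP x).1 y)).1 h
    simp [h, hterms x (Finset.mem_univ x)]
  · simp only [posterior, h, if_false]
    field_simp

lemma Ee_ne_top (R : ℝ) : Ee R Q P ≠ ⊤ := by
  have hjoint := outputPMF_mul_posterior hP hQ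
  have hDQP : DQP (outputPMF Q P) (posterior Q P) Q P ≠ ⊤ :=
    DQP_ne_top fun y x h => (hjoint y x).trans h
  have hDTQ : DTQ (outputPMF Q P) (posterior Q P) Q ≠ ⊤ := by
    refine DTQ_ne_top fun y x h => ?_
    rcases mul_eq_zero.1 h with h | h
    · rw [h, zero_mul]
    · rw [hjoint, h, zero_mul]
  have hhinge : max (DTQ (outputPMF Q P) (posterior Q P) Q - R) 0 ≠ ⊤ :=
    (max_lt (EReal.sub_coe_ne_top hDTQ R).lt_top EReal.zero_lt_top).ne
  exact ne_top_of_le_ne_top (EReal.add_ne_top hDQP hhinge)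
    (Ee_le R (isPMF_outputPMF hP hQ) (isCondPMF_posterior hP hQ))

end Posterior

section Hinge

/-- For `ρ ∈ [0,1]`: `ρ` is a subgradient of `t ↦ |t − R|⁺` at `d`. -/
def HingeSubgradient (ρ R : ℝ) (d : EReal) : Prop :=
  (0 < ρ → ρ < 1 → d = R) ∧ (ρ = 1 → (R : EReal) ≤ d) ∧ (ρ = 0 → d ≤ R)

variable {ρ R : ℝ}

lemma hingeSubgradient_of_mul_eq_max {d : ℝ} (h : ρ * (d - R) = max (d - R) 0) :
    HingeSubgradient ρ R d := by
  refine ⟨fun hpos hlt => ?_, fun h1 => ?_, fun h0 => ?_⟩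
  · rcases le_total (d - R) 0 with hle | hle
    · rw [max_eq_right hle] at h
      have := (mul_eq_zero.1 h).resolve_left hpos.ne'
      exact_mod_cast (sub_eq_zero.1 this)
    · rw [max_eq_left hle] at h
      have : d - R = 0 := by nlinarith
      exact_mod_cast (sub_eq_zero.1 this)
  · rw [h1, one_mul] at h
    exact_mod_cast sub_nonneg.1 (h ▸ le_max_right _ _)
  · rw [h0, zero_mul] at h
    exact_mod_cast sub_nonpos.1 (h ▸ le_max_left _ _)

lemma HingeSubgradient.mul_sub_eq_max {d : EReal} (hρ : ρ ∈ Icc (0 : ℝ) 1)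
    (h : HingeSubgradient ρ R d) : (ρ : EReal) * (d - R) = max (d - R) 0 := by
  obtain ⟨hmid, hone, hzero⟩ := h
  rcases hρ.1.eq_or_lt with h0 | hpos
  · have : d - R ≤ 0 := EReal.sub_nonpos.2 (hzero h0.symm)
    simp [← h0, max_eq_right this]
  rcases hρ.2.eq_or_lt with h1 | hlt
  · have : 0 ≤ d - R := EReal.sub_nonneg (by simp) (by simp) |>.2 (hone h1)
    simp [h1, max_eq_left this]
  · rw [hmid hpos hlt, ← EReal.coe_sub, sub_self]
    simp

lemma hingeSubgradient_of_add_eq_add {a d : EReal} (ha : a ≠ ⊥) (hd : d ≠ ⊥)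
    (hfin : a + max (d - R) 0 ≠ ⊤) (h : a + ρ * (d - R) = a + max (d - R) 0) :
    HingeSubgradient ρ R d := by
  have hmax_bot : max (d - R) 0 ≠ ⊥ := ne_bot_of_le_ne_bot EReal.zero_ne_bot (le_max_right _ _)
  obtain ⟨ha_top, hmax_top⟩ := (EReal.add_ne_top_iff_ne_top₂ ha hmax_bot).1 hfin
  have hd_top : d ≠ ⊤ := by
    rintro rfl
    exact hmax_top (max_eq_top.2 (Or.inl (EReal.top_sub_coe R)))
  lift a to ℝ using ⟨ha_top, ha⟩
  lift d to ℝ using ⟨hd_top, hd⟩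
  apply hingeSubgradient_of_mul_eq_max
  rw [← EReal.coe_sub, ← EReal.coe_mul, ← EReal.coe_zero, ← EReal.coe_max, ← EReal.coe_add,
    ← EReal.coe_add, EReal.coe_eq_coe_iff] at h
  exact add_left_cancel h

end Hinge

theorem stmt_2_general {𝓧 𝓨 : Type*} [Fintype 𝓧] [Fintype 𝓨]
    (P : 𝓧 → 𝓨 → ℝ) (hP : IsChannel P) (Q : 𝓧 → ℝ) (hQ : IsPMF Q)
    (R ρ : ℝ) (hρ : ρ ∈ Set.Icc (0 : ℝ) 1) :
    penMin Q P R ρ ≤ Ee R Q P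
    ∧ (Ee R Q P = penMin Q P R ρ →
        ∀ (T : 𝓨 → ℝ) (V : 𝓨 → 𝓧 → ℝ), IsPMF T → IsCondPMF V →
          DQP T V Q P + max (DTQ T V Q - (R : EReal)) 0 = Ee R Q P →
          DQP T V Q P + (ρ : EReal) * (DTQ T V Q - (R : EReal)) = penMin Q P R ρ
          ∧ (0 < ρ → ρ < 1 → DTQ T V Q = (R : EReal))
          ∧ (ρ = 1 → (R : EReal) ≤ DTQ T V Q)
          ∧ (ρ = 0 → DTQ T V Q ≤ (R : EReal)))
    ∧ (∀ (T : 𝓨 → ℝ) (V : 𝓨 → 𝓧 → ℝ), IsPMF T → IsCondPMF V →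
        DQP T V Q P + (ρ : EReal) * (DTQ T V Q - (R : EReal)) = penMin Q P R ρ →
        (0 < ρ → ρ < 1 → DTQ T V Q = (R : EReal)) →
        (ρ = 1 → (R : EReal) ≤ DTQ T V Q) →
        (ρ = 0 → DTQ T V Q ≤ (R : EReal)) →
        DQP T V Q P + max (DTQ T V Q - (R : EReal)) 0 = Ee R Q P
        ∧ Ee R Q P = penMin Q P R ρ) := by
  have hpointwise : ∀ T V, DQP T V Q P + ρ * (DTQ T V Q - R) ≤
      DQP T V Q P + max (DTQ T V Q - R) 0 := fun T V => by
    gcongr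
    exact EReal.coe_mul_le_max_zero hρ (EReal.sub_coe_ne_bot (DTQ_ne_bot T V Q) R)
  have hle : penMin Q P R ρ ≤ Ee R Q P := by
    refine le_sInf ?_
    rintro _ ⟨T, V, hT, hV, rfl⟩
    exact (penMin_le R ρ hT hV).trans (hpointwise T V)
  refine ⟨hle, fun heq T V hT hV hmin => ?_, fun T V hT hV hpen h01 h1 h0 => ?_⟩
  · have hpen : DQP T V Q P + ρ * (DTQ T V Q - R) = penMin Q P R ρ :=
      le_antisymm ((hpointwise T V).trans (hmin.trans heq).le) (penMin_le R ρ hT hV)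
    exact ⟨hpen, hingeSubgradient_of_add_eq_add (DQP_ne_bot T V Q P) (DTQ_ne_bot T V Q)
      (hmin ▸ Ee_ne_top hP hQ R) (hpen.trans (hmin.trans heq).symm)⟩
  · have hval : DQP T V Q P + max (DTQ T V Q - R) 0 = penMin Q P R ρ := by
      rw [← HingeSubgradient.mul_sub_eq_max hρ ⟨h01, h1, h0⟩]; exact hpen
    have hEe : Ee R Q P = penMin Q P R ρ :=
      le_antisymm ((Ee_le R hT hV).trans hval.le) hle
    exact ⟨hval.trans hEe.symm, hEe⟩

theorem stmt_2 {𝓧 𝓨 : Type*} [Fintype 𝓧] [Fintype 𝓨] [Nonempty 𝓧] [Nonempty 𝓨]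
    (P : 𝓧 → 𝓨 → ℝ) (hP : IsChannel P) (Q : 𝓧 → ℝ) (hQ : IsPMF Q)
    (R ρ : ℝ) (hρ : ρ ∈ Set.Icc (0 : ℝ) 1) :
    penMin Q P R ρ ≤ Ee R Q P
    ∧ (Ee R Q P = penMin Q P R ρ →
        ∀ (T : 𝓨 → ℝ) (V : 𝓨 → 𝓧 → ℝ), IsPMF T → IsCondPMF V →
          DQP T V Q P + max (DTQ T V Q - (R : EReal)) 0 = Ee R Q P →
          DQP T V Q P + (ρ : EReal) * (DTQ T V Q - (R : EReal)) = penMin Q P R ρ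
          ∧ (0 < ρ → ρ < 1 → DTQ T V Q = (R : EReal))
          ∧ (ρ = 1 → (R : EReal) ≤ DTQ T V Q)
          ∧ (ρ = 0 → DTQ T V Q ≤ (R : EReal)))
    ∧ (∀ (T : 𝓨 → ℝ) (V : 𝓨 → 𝓧 → ℝ), IsPMF T → IsCondPMF V →
        DQP T V Q P + (ρ : EReal) * (DTQ T V Q - (R : EReal)) = penMin Q P R ρ →
        (0 < ρ → ρ < 1 → DTQ T V Q = (R : EReal)) →
        (ρ = 1 → (R : EReal) ≤ DTQ T V Q) →
        (ρ = 0 → DTQ T V Q ≤ (R : EReal)) →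
        DQP T V Q P + max (DTQ T V Q - (R : EReal)) 0 = Ee R Q P
        ∧ Ee R Q P = penMin Q P R ρ) :=
  stmt_2_general P hP Q hQ R ρ hρ
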